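/- For every nonempty T ⊆ N, the Shapley–Taylor interaction index of the unanimity game u_T is given by: I_S(u_T) = 1 if S = T and |S| < k; I_S(u_T) = 0 if S ≠ T and |S| < k; I_S(u_T) = 1/C(|T|, k) if |S| = k and S ⊆ T; and I_S(u_T) = 0 if |S| = k and S ⊄ T. -/

import Mathlib

/-- Discrete derivative of a game `v` with respect to the set `S`, evaluated at `T`. -/
noncomputable def ddiff {n : ℕ} (S : Finset (Fin n)) (v : Finset (Fin n) → ℝ)
    (T : Finset (Fin n)) : ℝ :=
  ∑ W ∈ S.powerset, (-1 : ℝ) ^ (S.card - W.card) * v (W ∪ T)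

/-- The set `π^S` of players that precede every member of `S` in the ordering `π`
(player at position `p` is `π p`, so `i` precedes `j` iff `π.symm i < π.symm j`). -/
def preceders {n : ℕ} (π : Equiv.Perm (Fin n)) (S : Finset (Fin n)) : Finset (Fin n) :=
  Finset.univ.filter fun j => ∀ i ∈ S, π.symm j < π.symm i

/-- Per-permutation Shapley-Taylor value `I_{S,π}(v)` for order of explanation `k`. -/
noncomputable def stvPerm {n : ℕ} (k : ℕ) (S : Finset (Fin n)) (π : Equiv.Perm (Fin n))
    (v : Finset (Fin n) → ℝ) : ℝ :=
  if S.card < k then ddiff S v ∅ else ddiff S v (preceders π S)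

/-- The Shapley-Taylor interaction index `I_S(v)`: the average of `I_{S,π}(v)`
over all orderings `π`. -/
noncomputable def stv {n : ℕ} (k : ℕ) (S : Finset (Fin n)) (v : Finset (Fin n) → ℝ) : ℝ :=
  (1 / (Nat.factorial n : ℝ)) * ∑ π : Equiv.Perm (Fin n), stvPerm k S π v

/-- The unanimity game `u_T`: worth `1` exactly when all of `T` is present. -/
noncomputable def uGame {n : ℕ} (T : Finset (Fin n)) : Finset (Fin n) → ℝ :=
  fun S => if T ⊆ S then 1 else 0

/-!
For `X` disjoint from `S`, expanding `u_T(W ∪ X)` as a product of indicators and applying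
`∏ (a + b) = ∑ ∏ a ∏ b` gives `δ_S u_T(X) = [S ⊆ T ⊆ S ∪ X]`. For `|S| < k` this is `[S = T]`.
For `|S| = k` the index is `[S ⊆ T]` times the fraction of orderings in which all of `T \ S`
precedes `S`, i.e. in which `S` is the set of the last `k` members of `T`. Each ordering has
exactly one such `k`-subset of `T`, and a permutation of `T` carrying one `k`-subset to another
shows that all `C(|T|, k)` of them are equally frequent, so the fraction is `1 / C(|T|, k)`.
-/

open Finset Equiv

section Ranking

variable {α β : Type*} [DecidableEq α] [LinearOrder β]

theorem exists_subset_card_eq_forall_sdiff_lt {f : α → β} (hf : f.Injective) {k : ℕ}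
    {T : Finset α} (hk : k ≤ #T) : ∃ S ⊆ T, #S = k ∧ ∀ a ∈ T \ S, ∀ b ∈ S, f a < f b := by
  induction k generalizing T with
  | zero => exact ⟨∅, empty_subset _, rfl, by simp⟩
  | succ k ih =>
    obtain ⟨M, hM, hMmax⟩ := T.exists_max_image f (card_pos.1 (by omega))
    obtain ⟨S, hST, hS, hlt⟩ := ih (T := T.erase M) (by rw [card_erase_of_mem hM]; omega)
    have hMS : M ∉ S := fun h => by simpa using hST h
    refine ⟨insert M S, insert_subset hM (hST.trans (erase_subset _ _)), ?_, ?_⟩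
    · rw [card_insert_of_notMem hMS, hS]
    · intro a ha b hb
      simp only [mem_sdiff, mem_insert, not_or] at ha
      rcases mem_insert.1 hb with rfl | hb
      · exact (hMmax a ha.1).lt_of_ne (hf.ne ha.2.1)
      · exact hlt a (by simp [ha]) b hb

theorem eq_of_forall_sdiff_lt {f : α → β} {T S S' : Finset α} (hS : S ⊆ T) (hS' : S' ⊆ T)
    (hcard : #S = #S') (h : ∀ a ∈ T \ S, ∀ b ∈ S, f a < f b)
    (h' : ∀ a ∈ T \ S', ∀ b ∈ S', f a < f b) : S = S' := by
  by_contra hne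
  obtain ⟨a, ha⟩ : (S \ S').Nonempty :=
    sdiff_nonempty.2 fun hsub => hne (eq_of_subset_of_card_le hsub hcard.ge)
  obtain ⟨b, hb⟩ : (S' \ S).Nonempty :=
    sdiff_nonempty.2 fun hsub => hne (eq_of_subset_of_card_le hsub hcard.le).symm
  rw [mem_sdiff] at ha hb
  exact lt_asymm (h' a (mem_sdiff.2 ⟨hS ha.1, ha.2⟩) b hb.1)
    (h b (mem_sdiff.2 ⟨hS' hb.1, hb.2⟩) a ha.1)

theorem card_filter_powersetCard_forall_sdiff_lt {f : α → β} (hf : f.Injective) {k : ℕ}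
    {T : Finset α} (hk : k ≤ #T) :
    #{S ∈ T.powersetCard k | ∀ a ∈ T \ S, ∀ b ∈ S, f a < f b} = 1 := by
  obtain ⟨S, hST, hS, hlt⟩ := exists_subset_card_eq_forall_sdiff_lt hf hk
  refine card_eq_one.2 ⟨S, eq_singleton_iff_unique_mem.2 ⟨by simpa [hST, hS] using hlt, ?_⟩⟩
  intro S' hS'
  obtain ⟨hS', hlt'⟩ := mem_filter.1 hS'
  obtain ⟨hS'T, hS'card⟩ := mem_powersetCard.1 hS'
  exact eq_of_forall_sdiff_lt hS'T hST (hS'card.trans hS.symm) hlt' hlt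

end Ranking

section PermOfSubset

variable {α : Type*} [DecidableEq α]

theorem exists_perm_map_eq_of_subset {T S S' : Finset α} (hS : S ⊆ T) (hS' : S' ⊆ T)
    (h : #S = #S') :
    ∃ ρ : Perm α, T.map ρ.toEmbedding = T ∧ S.map ρ.toEmbedding = S' := by
  obtain ⟨τ, hτ⟩ := Perm.exists_map_finset_eq (S.subtype (· ∈ T)) (S'.subtype (· ∈ T))
    (by rw [card_subtype, card_subtype, filter_true_of_mem hS, filter_true_of_mem hS', h])
  have hmap : ∀ U ⊆ T, U.map (Perm.ofSubtype τ).toEmbedding =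
      ((U.subtype (· ∈ T)).map τ.toEmbedding).map (Function.Embedding.subtype _) := by
    intro U hU
    conv_lhs => rw [← subtype_map_of_mem hU]
    rw [map_map, map_map]
    congr 1
    ext x
    exact Perm.ofSubtype_apply_coe τ x
  refine ⟨Perm.ofSubtype τ, ?_, ?_⟩
  · rw [hmap T Subset.rfl, subtype_mem_eq_attach, attach_eq_univ, map_univ_equiv,
      ← attach_eq_univ, attach_map_val]
  · rw [hmap S hS, hτ, subtype_map_of_mem hS']

end PermOfSubset

section Perm

variable {α : Type*} [Fintype α] [DecidableEq α] [LinearOrder α]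

theorem card_filter_forall_lt_map (ρ : Perm α) (A B : Finset α) :
    #{σ : Perm α | ∀ a ∈ A.map ρ.toEmbedding, ∀ b ∈ B.map ρ.toEmbedding, σ a < σ b} =
      #{σ : Perm α | ∀ a ∈ A, ∀ b ∈ B, σ a < σ b} :=
  card_equiv (Equiv.mulRight ρ) fun σ => by
    simp only [mem_filter, mem_univ, true_and, forall_mem_map, coe_mulRight, Perm.mul_apply,
      toEmbedding_apply]

theorem choose_mul_card_filter_forall_sdiff_lt {T S : Finset α} (hS : S ⊆ T) :
    (#T).choose #S * #{σ : Perm α | ∀ a ∈ T \ S, ∀ b ∈ S, σ a < σ b} =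
      (Fintype.card α).factorial := by
  have hpairs := card_mul_eq_card_mul (s := univ) (t := T.powersetCard #S)
    (fun (σ : Perm α) S' => ∀ a ∈ T \ S', ∀ b ∈ S', σ a < σ b) (m := 1)
    (n := #{σ : Perm α | ∀ a ∈ T \ S, ∀ b ∈ S, σ a < σ b})
    (fun σ _ => by
      rw [bipartiteAbove]
      -- `convert` only has to identify two `Decidable` instances of the same predicate
      convert card_filter_powersetCard_forall_sdiff_lt σ.injective (card_le_card hS)) ?_
  · rwa [card_univ, Fintype.card_perm, mul_one, card_powersetCard, eq_comm] at hpairs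
  intro S' hS'
  obtain ⟨hS'T, hcard⟩ := mem_powersetCard.1 hS'
  obtain ⟨ρ, hT, hρ⟩ := exists_perm_map_eq_of_subset hS'T hS hcard
  rw [bipartiteBelow, ← card_filter_forall_lt_map ρ, Finset.map_sdiff, hT, hρ]

end Perm

theorem ddiff_uGame {n : ℕ} {S T X : Finset (Fin n)} (hX : Disjoint S X) :
    ddiff S (uGame T) X = if S ⊆ T ∧ T \ S ⊆ X then 1 else 0 := by
  -- the summand in the shape of `Finset.prod_add`, with `f = 1` and `g = -[· ∉ T]`
  have hterm : ∀ W ∈ S.powerset, (-1 : ℝ) ^ (#S - #W) * uGame T (W ∪ X) =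
      ((∏ _i ∈ W, 1) * ∏ i ∈ S \ W, if i ∉ T then -1 else 0) * if T \ S ⊆ X then 1 else 0 := by
    intro W hW
    have hWS := mem_powerset.1 hW
    rw [prod_const_one, one_mul, prod_ite_zero, prod_const, card_sdiff_of_subset hWS, ite_mul,
      zero_mul, uGame]
    have hcover : T ⊆ W ∪ X ↔ (∀ i ∈ S \ W, i ∉ T) ∧ T \ S ⊆ X := by
      rw [disjoint_left] at hX
      simp only [subset_iff, mem_union, mem_sdiff] at hWS ⊢
      grind
    rw [if_congr hcover rfl rfl, ite_and]
    split_ifs <;> simp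
  rw [ddiff, sum_congr rfl hterm, ← sum_mul, ← prod_add]
  have hfactor : ∀ i, (1 + if i ∉ T then (-1 : ℝ) else 0) = if i ∈ T then 1 else 0 := by
    intro i; split_ifs <;> simp_all
  simp only [hfactor, prod_boole, ite_zero_mul_ite_zero, mul_one, ← subset_iff]

theorem disjoint_preceders {n : ℕ} (π : Perm (Fin n)) (S : Finset (Fin n)) :
    Disjoint S (preceders π S) :=
  disjoint_left.2 fun i hi hpre => lt_irrefl _ ((mem_filter.1 hpre).2 i hi)

theorem subset_preceders_iff {n : ℕ} {π : Perm (Fin n)} {A S : Finset (Fin n)} :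
    A ⊆ preceders π S ↔ ∀ a ∈ A, ∀ b ∈ S, π.symm a < π.symm b := by
  simp [preceders, subset_iff]

section ShapleyTaylor

variable {n k : ℕ} {S T : Finset (Fin n)}

theorem stv_of_card_lt (h : #S < k) (v : Finset (Fin n) → ℝ) : stv k S v = ddiff S v ∅ := by
  simp only [stv, stvPerm, if_pos h, sum_const, card_univ, Fintype.card_perm, Fintype.card_fin,
    nsmul_eq_mul]
  field_simp

theorem stv_uGame_of_card_lt (h : #S < k) : stv k S (uGame T) = if S = T then 1 else 0 := by
  rw [stv_of_card_lt h, ddiff_uGame (disjoint_empty_right S)]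
  simp only [subset_empty, sdiff_eq_empty_iff_subset, ← subset_antisymm_iff]

theorem stvPerm_uGame_of_not_lt (h : ¬#S < k) (π : Perm (Fin n)) :
    stvPerm k S π (uGame T) =
      if S ⊆ T ∧ ∀ a ∈ T \ S, ∀ b ∈ S, π.symm a < π.symm b then 1 else 0 := by
  simp only [stvPerm, if_neg h, ddiff_uGame (disjoint_preceders π S), subset_preceders_iff]

theorem stv_uGame_of_not_subset (h : ¬#S < k) (hST : ¬S ⊆ T) : stv k S (uGame T) = 0 := by
  simp [stv, stvPerm_uGame_of_not_lt h, hST]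

theorem stv_uGame_of_subset (h : ¬#S < k) (hST : S ⊆ T) :
    stv k S (uGame T) = 1 / (#T).choose #S := by
  have hsum : ∑ π : Perm (Fin n), stvPerm k S π (uGame T) =
      #{σ : Perm (Fin n) | ∀ a ∈ T \ S, ∀ b ∈ S, σ a < σ b} := by
    simp only [stvPerm_uGame_of_not_lt h, hST, true_and, sum_boole]
    exact congrArg _ (card_equiv (Equiv.inv _) fun π => by simp)
  have hcount : (#T).choose #S * #{σ : Perm (Fin n) | ∀ a ∈ T \ S, ∀ b ∈ S, σ a < σ b} =
      n.factorial := by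
    -- `convert` identifies the generic and the `Fin`-specific decidability instances of `<`
    convert choose_mul_card_filter_forall_sdiff_lt hST
    exact (Fintype.card_fin n).symm
  have hC : ((#T).choose #S : ℝ) ≠ 0 := by exact_mod_cast (Nat.choose_pos (card_le_card hST)).ne'
  rw [stv, hsum, eq_div_iff hC, mul_assoc, mul_comm (#_ : ℝ), ← Nat.cast_mul, hcount, one_div,
    inv_mul_cancel₀ (Nat.cast_ne_zero.2 n.factorial_ne_zero)]

end ShapleyTaylor

theorem stv_uGame_general {n k : ℕ}
    (T : Finset (Fin n)) (S : Finset (Fin n)) :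
    (S.card < k →
      (S = T → stv k S (uGame T) = 1) ∧ (S ≠ T → stv k S (uGame T) = 0)) ∧
    (S.card = k →
      (S ⊆ T → stv k S (uGame T) = 1 / (T.card.choose k : ℝ)) ∧
      (¬ S ⊆ T → stv k S (uGame T) = 0)) := by
  refine ⟨fun hlt => ?_, fun hcard => ?_⟩
  · rw [stv_uGame_of_card_lt hlt]
    exact ⟨fun h => if_pos h, fun h => if_neg h⟩
  · have h : ¬#S < k := hcard.not_lt
    refine ⟨fun hST => ?_, stv_uGame_of_not_subset h⟩
    rw [stv_uGame_of_subset h hST, hcard]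

/-- The Shapley-Taylor interaction index of the unanimity game `u_T`:
`1` if `S = T` with `|S| < k`; `0` if `S ≠ T` with `|S| < k`; `1/C(|T|, k)` if `|S| = k`
and `S ⊆ T`; and `0` if `|S| = k` and `S ⊄ T`. -/
theorem stv_uGame {n k : ℕ} (hk1 : 1 ≤ k) (hkn : k ≤ n)
    (T : Finset (Fin n)) (hT : T.Nonempty) (S : Finset (Fin n)) (hS : S.Nonempty) :
    (S.card < k →
      (S = T → stv k S (uGame T) = 1) ∧ (S ≠ T → stv k S (uGame T) = 0)) ∧
    (S.card = k →
      (S ⊆ T → stv k S (uGame T) = 1 / (T.card.choose k : ℝ)) ∧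
      (¬ S ⊆ T → stv k S (uGame T) = 0)) :=
  stv_uGame_general T S
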